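/- The map f : A → 𝒱* into the dual space of 𝒱 defined by f(v) := (g_v(v,·))|_𝒱 is smooth, its Fréchet derivative at each v ∈ A is the surjective linear map u ↦ (g_v(u,·))|_𝒱, and the set of horizontal vectors equals f⁻¹(0). (Hence the set ℋ of horizontal admissible vectors is a smooth submanifold of V of codimension r = dim 𝒱, and its tangent space at v is the set of g_v-horizontal vectors.) -/

import Mathlib

set_option synthInstance.maxHeartbeats 1000000
set_option maxHeartbeats 1000000

/-- Pseudo-Finsler data on a real normed vector space `V`. -/
structure PseudoFinslerData (V : Type*) [NormedAddCommGroup V] [NormedSpace ℝ V] where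
  A : Set V
  L : V → ℝ
  g : V → V →ₗ[ℝ] V →ₗ[ℝ] ℝ
  A_ne_zero : ∀ v ∈ A, v ≠ 0
  A_open : IsOpen A
  A_cone : ∀ v ∈ A, ∀ c : ℝ, 0 < c → c • v ∈ A
  L_smooth : ContDiffOn ℝ (⊤ : ℕ∞) L A
  L_homog : ∀ v ∈ A, ∀ c : ℝ, 0 < c → L (c • v) = c ^ 2 * L v
  g_def : ∀ v ∈ A, ∀ e h : V,
    g v e h = (1 / 2) * deriv (fun s : ℝ => deriv (fun t : ℝ => L (v + s • e + t • h)) 0) 0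
  g_symm : ∀ v ∈ A, ∀ e h : V, g v e h = g v h e
  g_nondeg : ∀ v ∈ A, ∀ e : V, (∀ h : V, g v e h = 0) → e = 0

/-- The claimed Fréchet derivative of `f(v) = (g_v(v,·))|_𝒱` at `v`: the linear map
`u ↦ (g_v(u,·))|_𝒱` into the (continuous) dual of `𝒱`. -/
noncomputable def fDeriv {V : Type*}
    [NormedAddCommGroup V] [NormedSpace ℝ V] [FiniteDimensional ℝ V]
    (D : PseudoFinslerData V) (𝒱 : Submodule ℝ V) (v : V) : V →ₗ[ℝ] (𝒱 →L[ℝ] ℝ) where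
  toFun u := LinearMap.toContinuousLinearMap ((D.g v u).domRestrict 𝒱)
  map_add' u u' := by ext w; simp
  map_smul' c u := by ext w; simp

/-! By the definition of `g` and the smoothness of `L`, `g_v = ½ D²L(v)`. Since `L` is
positively 2-homogeneous, `DL` is positively 1-homogeneous, so Euler's identity
`D²L(v) v = DL(v)` gives `g_v(v, ·) = ½ DL(v)`. Hence `f` is `½ DL` followed by restriction
to `𝒱`, which is smooth with derivative `u ↦ ½ D²L(v)(u, ·)|_𝒱 = g_v(u, ·)|_𝒱`; this map is
onto `𝒱*` because `g_v` identifies `V` with `V*` and every functional on `𝒱` extends to `V`. -/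

open Topology

section Calculus

variable {𝕜 : Type*} [NontriviallyNormedField 𝕜]
  {E F : Type*} [NormedAddCommGroup E] [NormedSpace 𝕜 E] [NormedAddCommGroup F] [NormedSpace 𝕜 F]

theorem ContDiffAt.lineDeriv_lineDeriv {f : E → F} {x : E} (hf : ContDiffAt 𝕜 2 f x) (e h : E) :
    lineDeriv 𝕜 (fun y => lineDeriv 𝕜 f y h) x e = fderiv 𝕜 (fderiv 𝕜 f) x e h := by
  have hfderiv : (fun y => lineDeriv 𝕜 f y h) =ᶠ[𝓝 x] fun y => fderiv 𝕜 f y h := by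
    filter_upwards [hf.eventually (by simp)] with y hy
    exact (hy.differentiableAt (by norm_num)).lineDeriv_eq_fderiv
  have hf' : HasFDerivAt (fderiv 𝕜 f) (fderiv 𝕜 (fderiv 𝕜 f) x) x :=
    ((hf.fderiv_right (m := 1) (by norm_num)).differentiableAt one_ne_zero).hasFDerivAt
  rw [hfderiv.lineDeriv_eq]
  exact (((ContinuousLinearMap.apply 𝕜 F h).hasFDerivAt.comp x hf').hasLineDerivAt e).lineDeriv

theorem fderiv_smul_eq_of_homogeneous {f : E → F} {x : E} {c : 𝕜} (hc : c ≠ 0) (k : ℕ)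
    (hhom : (fun y => f (c • y)) =ᶠ[𝓝 x] fun y => c ^ (k + 1) • f y) :
    fderiv 𝕜 f (c • x) = c ^ k • fderiv 𝕜 f x := by
  have h := fderiv_comp_smul (f := f) (x := x) c
  rw [hhom.fderiv_eq, show (fun y => c ^ (k + 1) • f y) = c ^ (k + 1) • f from rfl,
    fderiv_const_smul_field, pow_succ', mul_smul] at h
  exact smul_right_injective _ hc h.symm

theorem fderiv_apply_self_of_homogeneous {f : E → F} {x : E} (hf : DifferentiableAt 𝕜 f x)
    (hhom : (fun c : 𝕜 => f (c • x)) =ᶠ[𝓝 1] fun c => c • f x) :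
    fderiv 𝕜 f x x = f x := by
  have hray : HasDerivAt (fun c : 𝕜 => c • x) x 1 := by
    simpa using (hasDerivAt_id (1 : 𝕜)).smul_const x
  have hcomp : HasDerivAt (fun c : 𝕜 => f (c • x)) (fderiv 𝕜 f x x) 1 := by
    rw [← one_smul 𝕜 x] at hf
    simpa [Function.comp_def] using hf.hasFDerivAt.comp_hasDerivAt (1 : 𝕜) hray
  have hlin : HasDerivAt (fun c : 𝕜 => c • f x) (f x) 1 := by
    simpa using (hasDerivAt_id (1 : 𝕜)).smul_const (f x)
  exact hcomp.unique (hlin.congr_of_eventuallyEq hhom)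

end Calculus

theorem LinearMap.BilinForm.SeparatingLeft.surjective_compl₂_subtype
    {K V : Type*} [Field K] [AddCommGroup V] [Module K V] [FiniteDimensional K V]
    {B : LinearMap.BilinForm K V} (hB : B.SeparatingLeft) (W : Submodule K V) :
    Function.Surjective (B.compl₂ W.subtype) := by
  intro φ
  obtain ⟨ψ, hψ⟩ := LinearMap.exists_extend φ
  refine ⟨((B.toDual (.ofSeparatingLeft hB)).symm ψ), LinearMap.ext fun w => ?_⟩
  simpa using LinearMap.congr_fun hψ w

namespace PseudoFinslerData

variable {V : Type*} [NormedAddCommGroup V] [NormedSpace ℝ V] (D : PseudoFinslerData V) {v : V}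

theorem contDiffAt_L (hv : v ∈ D.A) : ContDiffAt ℝ (⊤ : ℕ∞) D.L v :=
  D.L_smooth.contDiffAt (D.A_open.mem_nhds hv)

theorem g_eq_fderiv_fderiv (hv : v ∈ D.A) (e h : V) :
    D.g v e h = 1 / 2 * fderiv ℝ (fderiv ℝ D.L) v e h := by
  rw [D.g_def v hv e h]
  exact congrArg _ (((D.contDiffAt_L hv).of_le (WithTop.coe_le_coe.mpr le_top)).lineDeriv_lineDeriv e h)

theorem fderiv_L_smul (hv : v ∈ D.A) {c : ℝ} (hc : 0 < c) :
    fderiv ℝ D.L (c • v) = c • fderiv ℝ D.L v := by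
  have hhom : (fun y => D.L (c • y)) =ᶠ[𝓝 v] fun y => c ^ (1 + 1) • D.L y := by
    filter_upwards [D.A_open.mem_nhds hv] with y hy
    simpa using D.L_homog y hy c hc
  simpa using fderiv_smul_eq_of_homogeneous hc.ne' 1 hhom

theorem fderiv_fderiv_L_self (hv : v ∈ D.A) : fderiv ℝ (fderiv ℝ D.L) v v = fderiv ℝ D.L v := by
  have hdiff : DifferentiableAt ℝ (fderiv ℝ D.L) v :=
    ((D.contDiffAt_L hv).fderiv_right (m := 1) (WithTop.coe_le_coe.mpr le_top)).differentiableAt one_ne_zero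
  refine fderiv_apply_self_of_homogeneous hdiff ?_
  filter_upwards [Ioi_mem_nhds one_pos] with c hc
  exact D.fderiv_L_smul hv hc

theorem g_self (hv : v ∈ D.A) (h : V) : D.g v v h = 1 / 2 * fderiv ℝ D.L v h := by
  rw [D.g_eq_fderiv_fderiv hv, D.fderiv_fderiv_L_self hv]

variable [FiniteDimensional ℝ V] (𝒱 : Submodule ℝ V)

theorem toContinuousLinearMap_domRestrict_g_self (hv : v ∈ D.A) :
    LinearMap.toContinuousLinearMap ((D.g v v).domRestrict 𝒱)
      = (ContinuousLinearMap.compL ℝ 𝒱 V ℝ).flip 𝒱.subtypeL ((1 / 2 : ℝ) • fderiv ℝ D.L v) := by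
  ext w
  simp [D.g_self hv]

theorem toContinuousLinearMap_fDeriv (hv : v ∈ D.A) :
    LinearMap.toContinuousLinearMap (fDeriv D 𝒱 v)
      = ((ContinuousLinearMap.compL ℝ 𝒱 V ℝ).flip 𝒱.subtypeL).comp
          ((1 / 2 : ℝ) • fderiv ℝ (fderiv ℝ D.L) v) := by
  ext u w
  simp [fDeriv, D.g_eq_fderiv_fderiv hv]

theorem contDiffOn_domRestrict_g_self :
    ContDiffOn ℝ (⊤ : ℕ∞)
      (fun v => LinearMap.toContinuousLinearMap ((D.g v v).domRestrict 𝒱)) D.A := by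
  have hfderiv : ContDiffOn ℝ (⊤ : ℕ∞) (fderiv ℝ D.L) D.A :=
    D.L_smooth.fderiv_of_isOpen D.A_open (WithTop.coe_le_coe.mpr le_top)
  exact ((ContinuousLinearMap.compL ℝ 𝒱 V ℝ).flip 𝒱.subtypeL).contDiff.comp_contDiffOn
    (hfderiv.const_smul _) |>.congr fun v hv => D.toContinuousLinearMap_domRestrict_g_self 𝒱 hv

theorem hasFDerivAt_domRestrict_g_self (hv : v ∈ D.A) :
    HasFDerivAt (fun v => LinearMap.toContinuousLinearMap ((D.g v v).domRestrict 𝒱))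
      (LinearMap.toContinuousLinearMap (fDeriv D 𝒱 v)) v := by
  have hfderiv : HasFDerivAt (fderiv ℝ D.L) (fderiv ℝ (fderiv ℝ D.L) v) v :=
    (((D.contDiffAt_L hv).fderiv_right (m := 1) (WithTop.coe_le_coe.mpr le_top)).differentiableAt
      one_ne_zero).hasFDerivAt
  have hf : (fun v => LinearMap.toContinuousLinearMap ((D.g v v).domRestrict 𝒱)) =ᶠ[𝓝 v]
      fun v => (ContinuousLinearMap.compL ℝ 𝒱 V ℝ).flip 𝒱.subtypeL
        ((1 / 2 : ℝ) • fderiv ℝ D.L v) := by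
    filter_upwards [D.A_open.mem_nhds hv] with y hy
    exact D.toContinuousLinearMap_domRestrict_g_self 𝒱 hy
  rw [D.toContinuousLinearMap_fDeriv 𝒱 hv]
  exact (((ContinuousLinearMap.compL ℝ 𝒱 V ℝ).flip 𝒱.subtypeL).hasFDerivAt.comp v
    (hfderiv.const_smul _)).congr_of_eventuallyEq hf

theorem surjective_fDeriv (hv : v ∈ D.A) : Function.Surjective (fDeriv D 𝒱 v) :=
  LinearMap.toContinuousLinearMap.surjective.comp
    (LinearMap.BilinForm.SeparatingLeft.surjective_compl₂_subtype (D.g_nondeg v hv) 𝒱)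

theorem setOf_horizontal_eq :
    {v | v ∈ D.A ∧ ∀ w ∈ 𝒱, D.g v v w = 0}
      = D.A ∩ (fun v => LinearMap.toContinuousLinearMap ((D.g v v).domRestrict 𝒱)) ⁻¹' {0} := by
  ext v
  simp [LinearMap.ext_iff]

end PseudoFinslerData

theorem stmt3_general {V : Type*}
    [NormedAddCommGroup V] [NormedSpace ℝ V] [FiniteDimensional ℝ V]
    (D : PseudoFinslerData V) (𝒱 : Submodule ℝ V) :
    ContDiffOn ℝ (⊤ : ℕ∞)
      (fun v => LinearMap.toContinuousLinearMap ((D.g v v).domRestrict 𝒱)) D.A ∧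
    (∀ v ∈ D.A,
      HasFDerivAt (fun v => LinearMap.toContinuousLinearMap ((D.g v v).domRestrict 𝒱))
        (LinearMap.toContinuousLinearMap (fDeriv D 𝒱 v)) v ∧
      Function.Surjective (fDeriv D 𝒱 v)) ∧
    {v | v ∈ D.A ∧ ∀ w ∈ 𝒱, D.g v v w = 0}
      = D.A ∩ (fun v => LinearMap.toContinuousLinearMap ((D.g v v).domRestrict 𝒱)) ⁻¹' {0} :=
  ⟨D.contDiffOn_domRestrict_g_self 𝒱,
    fun _ hv => ⟨D.hasFDerivAt_domRestrict_g_self 𝒱 hv, D.surjective_fDeriv 𝒱 hv⟩,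
    D.setOf_horizontal_eq 𝒱⟩

/-- the map `f : A → 𝒱*`, `f(v) = (g_v(v,·))|_𝒱`, is smooth, its Fréchet
derivative at each `v ∈ A` is the surjective linear map `u ↦ (g_v(u,·))|_𝒱`, and the set
of horizontal admissible vectors equals `A ∩ f⁻¹(0)`. -/
theorem stmt3 {V : Type*}
    [NormedAddCommGroup V] [NormedSpace ℝ V] [FiniteDimensional ℝ V]
    (D : PseudoFinslerData V) (𝒱 : Submodule ℝ V) (r : ℕ)
    (hr : Module.finrank ℝ 𝒱 = r) :
    ContDiffOn ℝ (⊤ : ℕ∞)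
      (fun v => LinearMap.toContinuousLinearMap ((D.g v v).domRestrict 𝒱)) D.A ∧
    (∀ v ∈ D.A,
      HasFDerivAt (fun v => LinearMap.toContinuousLinearMap ((D.g v v).domRestrict 𝒱))
        (LinearMap.toContinuousLinearMap (fDeriv D 𝒱 v)) v ∧
      Function.Surjective (fDeriv D 𝒱 v)) ∧
    {v | v ∈ D.A ∧ ∀ w ∈ 𝒱, D.g v v w = 0}
      = D.A ∩ (fun v => LinearMap.toContinuousLinearMap ((D.g v v).domRestrict 𝒱)) ⁻¹' {0} :=
  stmt3_general D 𝒱
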